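/- arXiv:2005.12011 — 3 statements merged into one kernel-verified Lean document; each statement's English description precedes it below -/
import Mathlib

section
/- (Zarankiewicz/Reiman-type incidence bound) Let P be a finite set of points and L a finite set of lines in an incidence structure where any two distinct points lie on at most one common line (equivalently, any two distinct lines share at most one common point). Then the number of incidences satisfies I(P, L) ≤ |P|·√|L| + |L| and also I(P, L) ≤ |L|·√|P| + |P|. -/
/-!
Let `I` be the number of incidences. Counting triples `(ℓ, p, q)` with `p, q` on `ℓ` by the pair
`(p, q)`, a pair of distinct points contributes at most one line, so `∑ₗ deg ℓ ^ 2 ≤ I + |P| ^ 2`.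
Cauchy–Schwarz gives `I ^ 2 ≤ |L| ∑ₗ deg ℓ ^ 2 ≤ |L| (I + |P| ^ 2)`, and solving this quadratic
inequality yields `I ≤ |P| √|L| + |L|`. The second bound is the first one for the dual structure,
in which two distinct lines share at most one point.
-/

open Finset Function

theorem le_mul_sqrt_add_of_sq_le {x a b : ℝ} (ha : 0 ≤ a) (hb : 0 ≤ b)
    (h : x ^ 2 ≤ b * x + b * a ^ 2) : x ≤ a * √b + b := by
  by_contra! hx
  have hsq : √b ^ 2 = b := Real.sq_sqrt hb
  have hab : 0 ≤ a * √b := by positivity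
  nlinarith [mul_nonneg hab hab]

def IsLinearIncidence {P L : Type*} (r : P → L → Prop) : Prop :=
  ∀ p q : P, p ≠ q → ∀ l l' : L, r p l → r q l → r p l' → r q l' → l = l'

namespace IsLinearIncidence

variable {P L : Type*} {r : P → L → Prop}

theorem swap (h : IsLinearIncidence r) : IsLinearIncidence (swap r) := by
  intro l l' hll' p q hpl hpl' hql hql'
  by_contra hpq
  exact hll' (h p q hpq l l' hpl hql hpl' hql')

variable [∀ p l, Decidable (r p l)]

theorem card_filter_and_le_one (h : IsLinearIncidence r) {p q : P} (hpq : p ≠ q) (Ls : Finset L) :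
    #{l ∈ Ls | r p l ∧ r q l} ≤ 1 :=
  card_le_one.mpr fun l hl l' hl' => by
    rw [mem_filter] at hl hl'
    exact h p q hpq l l' hl.2.1 hl.2.2 hl'.2.1 hl'.2.2

theorem sum_card_bipartiteBelow_sq_le (h : IsLinearIncidence r) (Ps : Finset P) (Ls : Finset L) :
    ∑ l ∈ Ls, #(Ps.bipartiteBelow r l) ^ 2 ≤ ∑ l ∈ Ls, #(Ps.bipartiteBelow r l) + #Ps ^ 2 := by
  classical
  set R : P × P → L → Prop := fun pq l => r pq.1 l ∧ r pq.2 l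
  have hcodeg (p q : P) :
      #(Ls.bipartiteAbove R (p, q)) ≤ (if p = q then #(Ls.bipartiteAbove r p) else 0) + 1 := by
    split_ifs with hpq
    · subst hpq; simp [R, bipartiteAbove]
    · exact h.card_filter_and_le_one hpq Ls
  calc ∑ l ∈ Ls, #(Ps.bipartiteBelow r l) ^ 2
      = ∑ l ∈ Ls, #((Ps ×ˢ Ps).bipartiteBelow R l) := by
        refine sum_congr rfl fun l _ => ?_
        rw [sq, ← card_product]
        congr 1
        ext ⟨p, q⟩
        simp only [mem_product, mem_bipartiteBelow, R]
        tauto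
    _ = ∑ p ∈ Ps, ∑ q ∈ Ps, #(Ls.bipartiteAbove R (p, q)) := by
        rw [← sum_card_bipartiteAbove_eq_sum_card_bipartiteBelow, sum_product]
    _ ≤ ∑ p ∈ Ps, ∑ q ∈ Ps, ((if p = q then #(Ls.bipartiteAbove r p) else 0) + 1) :=
        sum_le_sum fun p _ => sum_le_sum fun q _ => hcodeg p q
    _ = ∑ l ∈ Ls, #(Ps.bipartiteBelow r l) + #Ps ^ 2 := by
        simp [sum_add_distrib, sq, sum_card_bipartiteAbove_eq_sum_card_bipartiteBelow]

theorem sum_card_bipartiteBelow_le (h : IsLinearIncidence r) (Ps : Finset P) (Ls : Finset L) :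
    ((∑ l ∈ Ls, #(Ps.bipartiteBelow r l) : ℕ) : ℝ) ≤ #Ps * √(#Ls : ℝ) + #Ls := by
  have hcs : (∑ l ∈ Ls, #(Ps.bipartiteBelow r l)) ^ 2
      ≤ #Ls * ∑ l ∈ Ls, #(Ps.bipartiteBelow r l) + #Ls * #Ps ^ 2 := by
    rw [← mul_add]
    exact sq_sum_le_card_mul_sum_sq.trans
      (Nat.mul_le_mul_left _ (h.sum_card_bipartiteBelow_sq_le Ps Ls))
  exact le_mul_sqrt_add_of_sq_le (by positivity) (by positivity) (by exact_mod_cast hcs)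

end IsLinearIncidence

theorem ncard_incidences_eq_sum_card_bipartiteBelow {P L : Type*} (r : P → L → Prop)
    [∀ p l, Decidable (r p l)] (Ps : Finset P) (Ls : Finset L) :
    {pq : P × L | pq.1 ∈ Ps ∧ pq.2 ∈ Ls ∧ r pq.1 pq.2}.ncard
      = ∑ l ∈ Ls, #(Ps.bipartiteBelow r l) := by
  have hset : {pq : P × L | pq.1 ∈ Ps ∧ pq.2 ∈ Ls ∧ r pq.1 pq.2}
      = ↑{pq ∈ Ps ×ˢ Ls | r pq.1 pq.2} := by
    ext; simp [and_assoc]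
  simp only [hset, Set.ncard_coe_finset, card_filter, sum_product_right, bipartiteBelow]

theorem stmt_11 (P L : Type*) (r : P → L → Prop)
    (hlin : ∀ p q : P, p ≠ q → ∀ l l' : L,
      r p l → r q l → r p l' → r q l' → l = l')
    (Ps : Finset P) (Ls : Finset L) :
    (({pq : P × L | pq.1 ∈ Ps ∧ pq.2 ∈ Ls ∧ r pq.1 pq.2}.ncard : ℝ) ≤
        Ps.card * Real.sqrt Ls.card + Ls.card) ∧
    (({pq : P × L | pq.1 ∈ Ps ∧ pq.2 ∈ Ls ∧ r pq.1 pq.2}.ncard : ℝ) ≤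
        Ls.card * Real.sqrt Ps.card + Ps.card) := by
  classical
  have h : IsLinearIncidence r := hlin
  rw [ncard_incidences_eq_sum_card_bipartiteBelow]
  refine ⟨h.sum_card_bipartiteBelow_le Ps Ls, ?_⟩
  rw [← sum_card_bipartiteAbove_eq_sum_card_bipartiteBelow]
  exact h.swap.sum_card_bipartiteBelow_le Ls Ps
end

section
/- In a finite projective plane of order q, let X be a set of lines none of which passes through a fixed point Q, and let Y be a set of points such that every line of X is incident with at least q + 1 − t points of Y, where t < q. If |X| − 1 < (q − t)², then |Y| ≥ |X|. (This is the Hall-condition verification in Step 3 of the probabilistic argument.) -/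
/-!
Count the incidences `I` between the lines of `X` and the points of `Y`. Two distinct lines share
at most one point, so the pairs of lines of `X` through a common point of `Y` number at most
`|X|(|X| - 1)`, and Cauchy–Schwarz gives `I² ≤ |Y| (|X|(|X| - 1) + I)`. Every line of `X` carries
at least `q + 1 - t` points of `Y`, so `I ≥ (q - t + 1)|X|`; if `|Y| < |X|`, these two bounds are
incompatible with `|X| ≤ (q - t)²`.
-/

open Finset Configuration

namespace Configuration

section Incidences

open scoped Classical

variable {P L : Type*} [Membership P L]

noncomputable def incidences (X : Finset L) (Y : Finset P) : ℕ :=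
  ∑ l ∈ X, #{p ∈ Y | p ∈ l}

theorem incidences_eq_sum_card_lines_through (X : Finset L) (Y : Finset P) :
    incidences X Y = ∑ p ∈ Y, #{l ∈ X | p ∈ l} := by
  simp only [incidences, card_filter]
  exact sum_comm

variable [Nondegenerate P L]

theorem card_filter_mem_mem_le_one {l₁ l₂ : L} (h : l₁ ≠ l₂) (Y : Finset P) :
    #{p ∈ Y | p ∈ l₁ ∧ p ∈ l₂} ≤ 1 :=
  card_le_one.mpr fun _ ha _ hb =>
    ((Nondegenerate.eq_or_eq (mem_filter.1 ha).2.1 (mem_filter.1 hb).2.1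
      (mem_filter.1 ha).2.2 (mem_filter.1 hb).2.2).resolve_right h)

theorem sum_card_offDiag_lines_through_le (X : Finset L) (Y : Finset P) :
    ∑ p ∈ Y, #{l ∈ X | p ∈ l}.offDiag ≤ #X.offDiag := by
  have hpairs : ∀ p, #{l ∈ X | p ∈ l}.offDiag =
      ∑ ll ∈ X.offDiag, if p ∈ ll.1 ∧ p ∈ ll.2 then 1 else 0 := fun p => by
    rw [← card_filter]
    congr 1
    ext ⟨l₁, l₂⟩
    simp only [mem_filter, mem_offDiag]
    tauto
  calc ∑ p ∈ Y, #{l ∈ X | p ∈ l}.offDiag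
      = ∑ ll ∈ X.offDiag, #{p ∈ Y | p ∈ ll.1 ∧ p ∈ ll.2} := by
        simp only [hpairs, card_filter]
        exact sum_comm
    _ ≤ ∑ _ll ∈ X.offDiag, 1 :=
        sum_le_sum fun ll hll => card_filter_mem_mem_le_one (mem_offDiag.1 hll).2.2 Y
    _ = #X.offDiag := by rw [sum_const, smul_eq_mul, mul_one]

theorem incidences_sq_le (X : Finset L) (Y : Finset P) :
    incidences X Y ^ 2 ≤ #Y * (#X.offDiag + incidences X Y) := by
  have hsq : ∀ p, #{l ∈ X | p ∈ l} ^ 2 = #{l ∈ X | p ∈ l}.offDiag + #{l ∈ X | p ∈ l} :=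
    fun p => by rw [offDiag_card, Nat.sub_add_cancel (Nat.le_mul_self _), sq]
  calc incidences X Y ^ 2 ≤ #Y * ∑ p ∈ Y, #{l ∈ X | p ∈ l} ^ 2 := by
        rw [incidences_eq_sum_card_lines_through]
        exact sq_sum_le_card_mul_sum_sq
    _ ≤ #Y * (#X.offDiag + incidences X Y) := by
        rw [incidences_eq_sum_card_lines_through]
        simp only [hsq, sum_add_distrib]
        gcongr
        exact sum_card_offDiag_lines_through_le X Y

end Incidences

end Configuration

theorem Nat.le_of_sq_le_mul_add_of_succ_mul_le {n m s I : ℕ} (hn : n - 1 < s ^ 2)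
    (hI : (s + 1) * n ≤ I) (hsq : I ^ 2 ≤ m * (n * n - n + I)) : n ≤ m := by
  by_contra! hmn
  obtain ⟨e, rfl⟩ : ∃ e, n = e + 1 := ⟨n - 1, by omega⟩
  have hm : m ≤ e := by omega
  have hes : e + 1 ≤ s ^ 2 := by omega
  rw [show (e + 1) * (e + 1) - (e + 1) = (e + 1) * e by rw [mul_add_one, Nat.add_sub_cancel]]
    at hsq
  have hsq' : I ^ 2 ≤ e * ((e + 1) * e + I) := hsq.trans (by gcongr)
  -- `I (I - e) ≥ (s + 1)(e + 1)(s (e + 1) + 1) > e² (e + 1)` since `e + 1 ≤ s²`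
  nlinarith [Nat.mul_le_mul_left I hI, Nat.mul_le_mul_right (s * (e + 1)) hI,
    Nat.mul_le_mul_right ((e + 1) * (e + 1)) hes]

theorem stmt_14_general (P L : Type*) [Membership P L] [Configuration.ProjectivePlane P L]
    (t : ℕ)
    (X : Finset L)
    (Y : Finset P)
    (hinc : ∀ l ∈ X,
      Configuration.ProjectivePlane.order P L + 1 - t ≤
        {p : P | p ∈ Y ∧ p ∈ l}.ncard)
    (hX : X.card - 1 < (Configuration.ProjectivePlane.order P L - t) ^ 2) :
    X.card ≤ Y.card := by
  classical
  set q := ProjectivePlane.order P L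
  have hqt : 0 < q - t := Nat.pos_of_ne_zero fun h => by simp [h] at hX
  have hI : (q - t + 1) * #X ≤ incidences X Y := by
    rw [incidences, mul_comm, ← smul_eq_mul, ← sum_const]
    refine sum_le_sum fun l hl => ?_
    have hl := hinc l hl
    rwa [← coe_filter, Set.ncard_coe_finset, show q + 1 - t = q - t + 1 by omega] at hl
  have hsq := incidences_sq_le X Y
  rw [offDiag_card] at hsq
  exact Nat.le_of_sq_le_mul_add_of_succ_mul_le hX hI hsq

theorem stmt_14 (P L : Type*) [Membership P L] [Configuration.ProjectivePlane P L]
    [Fintype P] [Fintype L] (Q : P) (t : ℕ)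
    (ht : t < Configuration.ProjectivePlane.order P L)
    (X : Finset L) (hQ : ∀ l ∈ X, Q ∉ l)
    (Y : Finset P)
    (hinc : ∀ l ∈ X,
      Configuration.ProjectivePlane.order P L + 1 - t ≤
        {p : P | p ∈ Y ∧ p ∈ l}.ncard)
    (hX : X.card - 1 < (Configuration.ProjectivePlane.order P L - t) ^ 2) :
    X.card ≤ Y.card :=
  stmt_14_general P L t X Y hinc hX
end

section
/- Let v = q² + q + 1 with q ≡ 1 (mod 3), so 3 | v. Let D ⊆ Z_v be a (v, q+1, 1)-difference set. Color each x ∈ Z_v by x mod (v/3). Then this coloring uses exactly v/3 colors, each color class has exactly 3 elements, and every translate D + g contains two distinct elements of the same color. Consequently the balanced upper chromatic number of the cyclic plane satisfies χ̄_b = (q²+q+1)/3 when q ≡ 1 (mod 3). -/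
/-!
Write `v = 3m`. Reduction `ZMod v → ZMod m` is a surjective additive homomorphism, and the colour
of `x` is the value of its image, so there are `m` colours and every colour class is a coset of
the kernel, of size `v / m = 3`. Since `(m : ZMod v)` is nonzero, it is a difference `a - b` of
two elements of `D`; then `a + g = (b + g) + m` and `m` maps to `0` in `ZMod m`, so `a + g` and
`b + g` get the same colour.
-/

theorem AddMonoidHom.ncard_preimage_singleton_mul_card {G H : Type*} [AddGroup G] [AddGroup H]
    [Finite G] (f : G →+ H) (hf : Function.Surjective f) (y : H) :
    (f ⁻¹' {y}).ncard * Nat.card H = Nat.card G := by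
  obtain ⟨x, rfl⟩ := hf y
  have hfiber : f ⁻¹' {f x} = (x + ·) '' (f.ker : Set G) := by
    ext z
    simp only [Set.mem_preimage, Set.mem_singleton_iff, Set.mem_image, SetLike.mem_coe,
      AddMonoidHom.mem_ker]
    refine ⟨fun h => ⟨-x + z, by simp [h], add_neg_cancel_left x z⟩, ?_⟩
    rintro ⟨k, hk, rfl⟩
    simp [hk]
  rw [hfiber, Set.ncard_image_of_injective _ (add_right_injective x), ← Nat.card_coe_set_eq,
    SetLike.coe_sort_coe, ← f.ker.card_mul_index, AddSubgroup.index_ker, f.range_eq_top.mpr hf,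
    AddSubgroup.card_top]

namespace ZMod

variable {m n : ℕ} [NeZero n]

theorem val_mod_eq_val_castHom (h : m ∣ n) (x : ZMod n) :
    x.val % m = (castHom h (ZMod m) x).val := by
  rw [castHom_apply, cast_eq_val, val_natCast]

theorem ncard_range_val_mod [NeZero m] (h : m ∣ n) :
    (Set.range fun x : ZMod n => x.val % m).ncard = m := by
  have hcomp : (fun x : ZMod n => x.val % m) = val ∘ castHom h (ZMod m) :=
    funext (val_mod_eq_val_castHom h)
  rw [hcomp, Set.range_comp, (castHom_surjective h).range_eq,
    Set.ncard_image_of_injective _ (val_injective m), Set.ncard_univ, Nat.card_zmod]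

theorem ncard_setOf_val_mod_eq (h : m ∣ n) {c : ℕ} (hc : c < m) :
    {x : ZMod n | x.val % m = c}.ncard = n / m := by
  have : NeZero m := ⟨by omega⟩
  have hfiber : {x : ZMod n | x.val % m = c} = castHom h (ZMod m) ⁻¹' {(c : ZMod m)} := by
    ext x
    rw [Set.mem_preimage, Set.mem_singleton_iff, ← (val_injective m).eq_iff,
      val_natCast_of_lt hc, ← val_mod_eq_val_castHom h, Set.mem_ofPred_eq]
  have hcard := (castHom h (ZMod m)).toAddMonoidHom.ncard_preimage_singleton_mul_card
    (castHom_surjective h) (c : ZMod m)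
  rw [Nat.card_zmod, Nat.card_zmod] at hcard
  rw [hfiber]
  exact (Nat.div_eq_of_eq_mul_left (Nat.pos_of_neZero m) hcard.symm).symm

theorem val_add_natCast_mod_self (h : m ∣ n) (x : ZMod n) : (x + m).val % m = x.val % m := by
  rw [val_mod_eq_val_castHom h, val_mod_eq_val_castHom h, map_add, map_natCast, natCast_self,
    add_zero]

end ZMod

theorem Nat.three_dvd_sq_add_add_one {q : ℕ} (hq : q % 3 = 1) : 3 ∣ q ^ 2 + q + 1 := by
  obtain ⟨k, rfl⟩ : ∃ k, q = 3 * k + 1 := ⟨q / 3, by omega⟩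
  exact ⟨3 * k ^ 2 + 3 * k + 1, by ring⟩

theorem stmt_17_general (q v : ℕ) (hq : q % 3 = 1) (hv : v = q ^ 2 + q + 1)
    (D : Finset (ZMod v))
    (hdiff : ∀ x : ZMod v, x ≠ 0 →
      ∃! p : ZMod v × ZMod v, p.1 ∈ D ∧ p.2 ∈ D ∧ p.1 - p.2 = x) :
    (Set.range fun x : ZMod v => x.val % (v / 3)).ncard = v / 3 ∧
    (∀ c : ℕ, c < v / 3 → {x : ZMod v | x.val % (v / 3) = c}.ncard = 3) ∧
    (∀ g : ZMod v, ∃ a b, a ∈ D ∧ b ∈ D ∧ a ≠ b ∧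
      (a + g).val % (v / 3) = (b + g).val % (v / 3)) := by
  obtain ⟨m, hvm⟩ : 3 ∣ v := hv ▸ Nat.three_dvd_sq_add_add_one hq
  have hm : v / 3 = m := by omega
  have hm_pos : 0 < m := by omega
  have : NeZero v := ⟨by omega⟩
  have : NeZero m := ⟨hm_pos.ne'⟩
  have hdvd : m ∣ v := ⟨3, by omega⟩
  rw [hm]
  refine ⟨ZMod.ncard_range_val_mod hdvd, fun c hc => ?_, fun g => ?_⟩
  · rw [ZMod.ncard_setOf_val_mod_eq hdvd hc, hvm, Nat.mul_div_cancel _ hm_pos]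
  · have hm_ne : (m : ZMod v) ≠ 0 := by
      rw [Ne, ZMod.natCast_eq_zero_iff]
      exact fun h => hm_pos.ne' (Nat.eq_zero_of_dvd_of_lt h (by omega))
    obtain ⟨⟨a, b⟩, ⟨ha, hb, hab⟩, -⟩ := hdiff _ hm_ne
    refine ⟨a, b, ha, hb, fun h => hm_ne (by rw [← hab, h, sub_self]), ?_⟩
    rw [show a + g = (b + g) + m by rw [← hab]; abel, ZMod.val_add_natCast_mod_self hdvd]

theorem stmt_17 (q v : ℕ) (hq : q % 3 = 1) (hv : v = q ^ 2 + q + 1)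
    (D : Finset (ZMod v)) (hD : D.card = q + 1)
    (hdiff : ∀ x : ZMod v, x ≠ 0 →
      ∃! p : ZMod v × ZMod v, p.1 ∈ D ∧ p.2 ∈ D ∧ p.1 - p.2 = x) :
    (Set.range fun x : ZMod v => x.val % (v / 3)).ncard = v / 3 ∧
    (∀ c : ℕ, c < v / 3 → {x : ZMod v | x.val % (v / 3) = c}.ncard = 3) ∧
    (∀ g : ZMod v, ∃ a b, a ∈ D ∧ b ∈ D ∧ a ≠ b ∧
      (a + g).val % (v / 3) = (b + g).val % (v / 3)) :=
  stmt_17_general q v hq hv D hdiff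
end
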